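/- For every d ∈ ℕ, every α ∈ (0,1), every s > 0 and every x ∈ [0,1]^d: c_{1,s}(x)^α ≤ e^{−α s |x|} + c_{α,s}(x). -/

import Mathlib

open MeasureTheory

/-- The volume `|x| = x^(1) ⋯ x^(d)` of the box `[0,x]` for `x ∈ [0,1]^d`. -/
noncomputable def pvol {d : ℕ} (x : Fin d → ℝ) : ℝ := ∏ j, x j

/-- The unit cube `[0,1]^d`. -/
def cube (d : ℕ) : Set (Fin d → ℝ) := Set.Icc 0 1

/-- The function `c_{α,s}(y) = s ∫_{[0,1]^d} 1_{x ⪰ y} e^{-α s |x|} dx`. -/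
noncomputable def cAS {d : ℕ} (α s : ℝ) (y : Fin d → ℝ) : ℝ :=
  s * ∫ x in cube d,
    Set.indicator {x : Fin d → ℝ | y ≤ x} (fun x => Real.exp (-(α * s * pvol x))) x

/-!
On the region `z ⪰ x` of integration, `|z| ≥ |x|`, so splitting
`e^{-s|z|} = e^{-(1-α)s|z|} e^{-αs|z|} ≤ e^{-(1-α)s|x|} e^{-αs|z|}` gives
`c_{1,s}(x) ≤ e^{-(1-α)s|x|} c_{α,s}(x)`. Raising to the power `α` and writing
`e^{-α(1-α)s|x|} = (e^{-αs|x|})^{1-α}` yields `c_{1,s}(x)^α ≤ c_{α,s}(x)^α (e^{-αs|x|})^{1-α}`,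
and the weighted AM–GM inequality bounds the right-hand side by
`α c_{α,s}(x) + (1-α) e^{-αs|x|}`.
-/

lemma pvol_le_pvol {d : ℕ} {x z : Fin d → ℝ} (hx : 0 ≤ x) (hxz : x ≤ z) : pvol x ≤ pvol z :=
  Finset.prod_le_prod (fun j _ => hx j) (fun j _ => hxz j)

lemma continuous_pvol {d : ℕ} : Continuous (pvol : (Fin d → ℝ) → ℝ) :=
  continuous_finsetProd _ fun j _ => continuous_apply j

lemma integrableOn_cube_indicator_exp_pvol {d : ℕ} (c : ℝ) (y : Fin d → ℝ) :
    IntegrableOn ({z : Fin d → ℝ | y ≤ z}.indicator fun z => Real.exp (-(c * pvol z)))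
      (cube d) := by
  refine IntegrableOn.indicator ?_ measurableSet_Ici
  exact (continuous_const.mul continuous_pvol).neg.rexp.continuousOn
    |>.integrableOn_compact isCompact_Icc

lemma cAS_nonneg {d : ℕ} (α : ℝ) {s : ℝ} (hs : 0 ≤ s) (y : Fin d → ℝ) : 0 ≤ cAS α s y :=
  mul_nonneg hs <| setIntegral_nonneg measurableSet_Icc fun _ _ =>
    Set.indicator_nonneg (fun _ _ => (Real.exp_pos _).le) _

lemma cAS_le_exp_mul_cAS {d : ℕ} {α β s : ℝ} (hαβ : α ≤ β) (hs : 0 ≤ s) {x : Fin d → ℝ}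
    (hx : 0 ≤ x) :
    cAS β s x ≤ Real.exp (-((β - α) * s * pvol x)) * cAS α s x := by
  rw [cAS, cAS, mul_left_comm]
  refine mul_le_mul_of_nonneg_left ?_ hs
  rw [← integral_const_mul]
  refine setIntegral_mono_on (integrableOn_cube_indicator_exp_pvol (β * s) x)
    ((integrableOn_cube_indicator_exp_pvol (α * s) x).const_mul _) measurableSet_Icc
    fun z _ => ?_
  rw [← Set.indicator_const_mul]
  refine Set.indicator_le_indicator' fun hxz => ?_
  have hpvol : (β - α) * s * pvol x ≤ (β - α) * s * pvol z :=
    mul_le_mul_of_nonneg_left (pvol_le_pvol hx hxz) (mul_nonneg (sub_nonneg.2 hαβ) hs)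
  rw [← Real.exp_add, Real.exp_le_exp]
  linarith

theorem stmt14_general (d : ℕ) (α : ℝ) (hα : α ∈ Set.Ioo (0 : ℝ) 1)
    (s : ℝ) (hs : 0 < s) (x : Fin d → ℝ) (hx : x ∈ cube d) :
    cAS 1 s x ^ α ≤ Real.exp (-(α * s * pvol x)) + cAS α s x := by
  obtain ⟨hα0, hα1⟩ := hα
  set E := Real.exp (-(α * s * pvol x))
  set K := Real.exp (-((1 - α) * s * pvol x))
  have hc := cAS_nonneg α hs.le x
  have hKE : K ^ α = E ^ (1 - α) := by
    rw [← Real.exp_mul, ← Real.exp_mul]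
    ring_nf
  calc cAS 1 s x ^ α ≤ (K * cAS α s x) ^ α :=
        Real.rpow_le_rpow (cAS_nonneg 1 hs.le x) (cAS_le_exp_mul_cAS hα1.le hs.le hx.1) hα0.le
    _ = cAS α s x ^ α * E ^ (1 - α) := by
        rw [Real.mul_rpow (Real.exp_pos _).le hc, hKE, mul_comm]
    _ ≤ α * cAS α s x + (1 - α) * E :=
        Real.geom_mean_le_arith_mean2_weighted hα0.le (by linarith) hc (Real.exp_pos _).le
          (by ring)
    _ ≤ E + cAS α s x := by nlinarith [Real.exp_pos (-(α * s * pvol x))]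

/-- For every `α ∈ (0,1)`, `s > 0` and `x ∈ [0,1]^d`:
`c_{1,s}(x)^α ≤ e^{-α s |x|} + c_{α,s}(x)`. -/
theorem stmt14 (d : ℕ) (hd : 1 ≤ d) (α : ℝ) (hα : α ∈ Set.Ioo (0 : ℝ) 1)
    (s : ℝ) (hs : 0 < s) (x : Fin d → ℝ) (hx : x ∈ cube d) :
    cAS 1 s x ^ α ≤ Real.exp (-(α * s * pvol x)) + cAS α s x :=
  stmt14_general d α hα s hs x hx
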